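/- arXiv:1402.5462 — 3 statements merged into one kernel-verified Lean document; each statement's English description precedes it below -/
import Mathlib

section
/- Given angles α, β, γ ∈ (0, π) strictly satisfying the spherical triangle inequalities (β + γ > α, α + γ > β, α + β > γ, α + β + γ < 2π), there exist linearly independent unit vectors u, v, w in ℝ³ with v·w = cos α, u·w = cos β, u·v = cos γ. -/
open Matrix Real

theorem exists_unit_vectors_of_spherical_triangle_ineq (α β γ : ℝ)
    (hα : α ∈ Set.Ioo 0 π) (hβ : β ∈ Set.Ioo 0 π) (hγ : γ ∈ Set.Ioo 0 π)
    (h1 : β + γ > α) (h2 : α + γ > β) (h3 : α + β > γ) (h4 : α + β + γ < 2 * π) :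
    ∃ u v w : Fin 3 → ℝ,
      u ⬝ᵥ u = 1 ∧ v ⬝ᵥ v = 1 ∧ w ⬝ᵥ w = 1 ∧
      LinearIndependent ℝ ![u, v, w] ∧
      v ⬝ᵥ w = Real.cos α ∧ u ⬝ᵥ w = Real.cos β ∧ u ⬝ᵥ v = Real.cos γ := by
  obtain ⟨hα0, hαπ⟩ := hα
  obtain ⟨hβ0, hβπ⟩ := hβ
  obtain ⟨hγ0, hγπ⟩ := hγ
  have hsγ : Real.sin γ > 0 := Real.sin_pos_of_pos_of_lt_pi hγ0 hγπ
  have hsβ : Real.sin β > 0 := Real.sin_pos_of_pos_of_lt_pi hβ0 hβπ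
  set t : ℝ := (Real.cos α - Real.cos β * Real.cos γ) / Real.sin γ with ht
  -- positivity of the two factors
  have hA : Real.cos α < Real.cos (β - γ) := by
    rw [show Real.cos (β - γ) = Real.cos |β - γ| from (Real.cos_abs _).symm]
    exact Real.cos_lt_cos_of_nonneg_of_le_pi (abs_nonneg _) (le_of_lt hαπ)
      (abs_sub_lt_iff.mpr ⟨by linarith, by linarith⟩)
  have hB : Real.cos (β + γ) < Real.cos α := by
    rcases le_or_gt (β + γ) π with h | h
    · exact Real.cos_lt_cos_of_nonneg_of_le_pi (le_of_lt hα0) h h1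
    · rw [show β + γ = 2 * π - (2 * π - (β + γ)) by ring, Real.cos_two_pi_sub]
      exact Real.cos_lt_cos_of_nonneg_of_le_pi (le_of_lt hα0) (by linarith) (by linarith)
  have hfac : (Real.cos (β - γ) - Real.cos α) * (Real.cos α - Real.cos (β + γ))
      = Real.sin β ^ 2 * Real.sin γ ^ 2 - (Real.cos α - Real.cos β * Real.cos γ) ^ 2 := by
    rw [Real.cos_sub, Real.cos_add]; ring
  have hsq : Real.sin β ^ 2 * Real.sin γ ^ 2 - (Real.cos α - Real.cos β * Real.cos γ) ^ 2 > 0 := by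
    rw [← hfac]; exact mul_pos (by linarith) (by linarith)
  have hzsq : 1 - Real.cos β ^ 2 - t ^ 2 > 0 := by
    have : t ^ 2 = (Real.cos α - Real.cos β * Real.cos γ) ^ 2 / Real.sin γ ^ 2 := by
      rw [ht, div_pow]
    rw [this, show (1 : ℝ) - Real.cos β ^ 2 = Real.sin β ^ 2 by
      have := Real.sin_sq_add_cos_sq β; linarith]
    rw [gt_iff_lt, sub_pos, div_lt_iff₀ (by positivity)]
    linarith
  set z : ℝ := Real.sqrt (1 - Real.cos β ^ 2 - t ^ 2) with hz
  have hzpos : z > 0 := Real.sqrt_pos.mpr hzsq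
  have hz2 : z ^ 2 = 1 - Real.cos β ^ 2 - t ^ 2 := Real.sq_sqrt (le_of_lt hzsq)
  refine ⟨![1, 0, 0], ![Real.cos γ, Real.sin γ, 0], ![Real.cos β, t, z], ?_, ?_, ?_, ?_, ?_, ?_, ?_⟩
  · simp [dotProduct, Fin.sum_univ_three]
  · simp [dotProduct, Fin.sum_univ_three]
    have := Real.sin_sq_add_cos_sq γ; nlinarith
  · simp [dotProduct, Fin.sum_univ_three]; nlinarith
  · have hM : ![![(1:ℝ), 0, 0], ![Real.cos γ, Real.sin γ, 0], ![Real.cos β, t, z]]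
        = fun i => (!![(1:ℝ), 0, 0; Real.cos γ, Real.sin γ, 0; Real.cos β, t, z] :
          Matrix (Fin 3) (Fin 3) ℝ) i := by
      ext i j; fin_cases i <;> fin_cases j <;> rfl
    rw [hM]
    refine (Matrix.linearIndependent_rows_iff_isUnit (A := !![(1:ℝ), 0, 0; Real.cos γ, Real.sin γ, 0; Real.cos β, t, z])).mpr ?_
    rw [Matrix.isUnit_iff_isUnit_det]
    have hdet : (!![(1:ℝ), 0, 0; Real.cos γ, Real.sin γ, 0; Real.cos β, t, z]).det
        = Real.sin γ * z := by
      rw [Matrix.det_fin_three]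
      simp
    rw [hdet]
    exact isUnit_iff_ne_zero.mpr (by positivity)
  · simp [dotProduct, Fin.sum_univ_three, ht]
    field_simp
    ring
  · simp [dotProduct, Fin.sum_univ_three]
  · simp [dotProduct, Fin.sum_univ_three]
end

section
/- For α, β, γ ∈ (0, π), the strict spherical triangle inequalities β + γ > α, α + γ > β, α + β > γ, α + β + γ < 2π hold if and only if 1 − cos²α − cos²β − cos²γ + 2·cos α·cos β·cos γ > 0. -/
open Real

theorem spherical_triangle_ineq_iff_gram_pos (α β γ : ℝ)
    (hα : α ∈ Set.Ioo 0 π) (hβ : β ∈ Set.Ioo 0 π) (hγ : γ ∈ Set.Ioo 0 π) :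
    (β + γ > α ∧ α + γ > β ∧ α + β > γ ∧ α + β + γ < 2 * π) ↔
      1 - Real.cos α ^ 2 - Real.cos β ^ 2 - Real.cos γ ^ 2 +
        2 * (Real.cos α * Real.cos β * Real.cos γ) > 0 := by
  obtain ⟨ha0, haπ⟩ := hα
  obtain ⟨hb0, hbπ⟩ := hβ
  obtain ⟨hc0, hcπ⟩ := hγ
  have hπ := Real.pi_pos
  have key : 1 - Real.cos α ^ 2 - Real.cos β ^ 2 - Real.cos γ ^ 2 +
      2 * (Real.cos α * Real.cos β * Real.cos γ) =
      (Real.cos α - Real.cos (β + γ)) * (Real.cos (γ - β) - Real.cos α) := by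
    rw [Real.cos_add, Real.cos_sub]
    linear_combination (-Real.sin γ ^ 2) * Real.sin_sq_add_cos_sq β +
      (Real.cos β ^ 2 - 1) * Real.sin_sq_add_cos_sq γ
  have h1 : Real.cos α - Real.cos (β + γ) =
      2 * Real.sin ((α + β + γ) / 2) * Real.sin ((β + γ - α) / 2) := by
    rw [Real.cos_sub_cos, show (α - (β + γ)) / 2 = -((β + γ - α) / 2) by ring,
      Real.sin_neg, show (α + (β + γ)) / 2 = (α + β + γ) / 2 by ring]
    ring
  have h2 : Real.cos (γ - β) - Real.cos α =
      2 * Real.sin ((α + γ - β) / 2) * Real.sin ((α + β - γ) / 2) := by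
    rw [Real.cos_sub_cos, show (γ - β - α) / 2 = -((α + β - γ) / 2) by ring,
      Real.sin_neg, show (γ - β + α) / 2 = (α + γ - β) / 2 by ring]
    ring
  have key2 : 1 - Real.cos α ^ 2 - Real.cos β ^ 2 - Real.cos γ ^ 2 +
      2 * (Real.cos α * Real.cos β * Real.cos γ) =
      4 * (Real.sin ((α + β + γ) / 2) * Real.sin ((β + γ - α) / 2) *
        Real.sin ((α + γ - β) / 2) * Real.sin ((α + β - γ) / 2)) := by
    rw [key, h1, h2]; ring
  rw [key2]
  constructor
  · rintro ⟨t1, t2, t3, t4⟩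
    have p1 : 0 < Real.sin ((α + β + γ) / 2) :=
      Real.sin_pos_of_pos_of_lt_pi (by linarith) (by linarith)
    have p2 : 0 < Real.sin ((β + γ - α) / 2) :=
      Real.sin_pos_of_pos_of_lt_pi (by linarith) (by linarith)
    have p3 : 0 < Real.sin ((α + γ - β) / 2) :=
      Real.sin_pos_of_pos_of_lt_pi (by linarith) (by linarith)
    have p4 : 0 < Real.sin ((α + β - γ) / 2) :=
      Real.sin_pos_of_pos_of_lt_pi (by linarith) (by linarith)
    have := mul_pos (mul_pos (mul_pos p1 p2) p3) p4
    linarith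
  · intro hpos
    by_contra hcon
    push_neg at hcon
    -- hcon : t1 → t2 → t3 → ¬ t4 form
    have hle : 4 * (Real.sin ((α + β + γ) / 2) * Real.sin ((β + γ - α) / 2) *
        Real.sin ((α + γ - β) / 2) * Real.sin ((α + β - γ) / 2)) ≤ 0 := by
      rcases le_or_gt α (β + γ) with h1' | h1'
      · rcases le_or_gt β (α + γ) with h2' | h2'
        · rcases le_or_gt γ (α + β) with h3' | h3'
          · -- all triangle inequalities hold (≤), so the sum must be ≥ 2π,
            -- or some inequality is an equality
            rcases eq_or_lt_of_le h1' with he | h1''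
            · have : Real.sin ((β + γ - α) / 2) = 0 := by
                rw [show (β + γ - α) / 2 = 0 by rw [← he]; ring, Real.sin_zero]
              rw [this]; simp
            rcases eq_or_lt_of_le h2' with he | h2''
            · have : Real.sin ((α + γ - β) / 2) = 0 := by
                rw [show (α + γ - β) / 2 = 0 by rw [← he]; ring, Real.sin_zero]
              rw [this]; simp
            rcases eq_or_lt_of_le h3' with he | h3''
            · have : Real.sin ((α + β - γ) / 2) = 0 := by
                rw [show (α + β - γ) / 2 = 0 by rw [← he]; ring, Real.sin_zero]
              rw [this]; simp
            have h4' : 2 * π ≤ α + β + γ := by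
              by_contra h4''
              push_neg at h4''
              exact hcon h1'' h2'' h3'' |>.not_gt h4''
            have p2 : 0 < Real.sin ((β + γ - α) / 2) :=
              Real.sin_pos_of_pos_of_lt_pi (by linarith) (by linarith)
            have p3 : 0 < Real.sin ((α + γ - β) / 2) :=
              Real.sin_pos_of_pos_of_lt_pi (by linarith) (by linarith)
            have p4 : 0 < Real.sin ((α + β - γ) / 2) :=
              Real.sin_pos_of_pos_of_lt_pi (by linarith) (by linarith)
            have p1 : Real.sin ((α + β + γ) / 2) ≤ 0 := by
              have : Real.sin ((α + β + γ) / 2) =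
                  -Real.sin ((α + β + γ) / 2 - π) := by
                rw [show (α + β + γ) / 2 = ((α + β + γ) / 2 - π) + π by ring,
                  Real.sin_add_pi]
                ring_nf
              rw [this]
              have : 0 ≤ Real.sin ((α + β + γ) / 2 - π) :=
                Real.sin_nonneg_of_nonneg_of_le_pi (by linarith) (by linarith)
              linarith
            have h := mul_nonpos_of_nonpos_of_nonneg (mul_nonpos_of_nonpos_of_nonneg
              (mul_nonpos_of_nonpos_of_nonneg p1 p2.le) p3.le) p4.le
            linarith
          · -- γ > α + β
            have p1 : 0 < Real.sin ((α + β + γ) / 2) :=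
              Real.sin_pos_of_pos_of_lt_pi (by linarith) (by linarith)
            have p2 : 0 < Real.sin ((β + γ - α) / 2) :=
              Real.sin_pos_of_pos_of_lt_pi (by linarith) (by linarith)
            have p3 : 0 < Real.sin ((α + γ - β) / 2) :=
              Real.sin_pos_of_pos_of_lt_pi (by linarith) (by linarith)
            have p4 : Real.sin ((α + β - γ) / 2) ≤ 0 := by
              have := Real.sin_nonneg_of_nonneg_of_le_pi
                (x := -((α + β - γ) / 2)) (by linarith) (by linarith)
              rw [Real.sin_neg] at this
              linarith
            have h := mul_nonpos_of_nonneg_of_nonpos (mul_pos (mul_pos p1 p2) p3).le p4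
            linarith
        · -- β > α + γ
          have p1 : 0 < Real.sin ((α + β + γ) / 2) :=
            Real.sin_pos_of_pos_of_lt_pi (by linarith) (by linarith)
          have p2 : 0 < Real.sin ((β + γ - α) / 2) :=
            Real.sin_pos_of_pos_of_lt_pi (by linarith) (by linarith)
          have p4 : 0 < Real.sin ((α + β - γ) / 2) :=
            Real.sin_pos_of_pos_of_lt_pi (by linarith) (by linarith)
          have p3 : Real.sin ((α + γ - β) / 2) ≤ 0 := by
            have := Real.sin_nonneg_of_nonneg_of_le_pi
              (x := -((α + γ - β) / 2)) (by linarith) (by linarith)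
            rw [Real.sin_neg] at this
            linarith
          have h := mul_nonpos_of_nonpos_of_nonneg
            (mul_nonpos_of_nonneg_of_nonpos (mul_pos p1 p2).le p3) p4.le
          linarith
      · -- α > β + γ
        have p1 : 0 < Real.sin ((α + β + γ) / 2) :=
          Real.sin_pos_of_pos_of_lt_pi (by linarith) (by linarith)
        have p3 : 0 < Real.sin ((α + γ - β) / 2) :=
          Real.sin_pos_of_pos_of_lt_pi (by linarith) (by linarith)
        have p4 : 0 < Real.sin ((α + β - γ) / 2) :=
          Real.sin_pos_of_pos_of_lt_pi (by linarith) (by linarith)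
        have p2 : Real.sin ((β + γ - α) / 2) ≤ 0 := by
          have := Real.sin_nonneg_of_nonneg_of_le_pi
            (x := -((β + γ - α) / 2)) (by linarith) (by linarith)
          rw [Real.sin_neg] at this
          linarith
        have h := mul_nonpos_of_nonpos_of_nonneg (mul_nonpos_of_nonpos_of_nonneg
          (mul_nonpos_of_nonneg_of_nonpos p1.le p2) p3.le) p4.le
        linarith
    linarith
end

section
/- Let F_i = (a_i, b_i), F_j = (a_j, b_j) be frames with distinct planes, and let Λ_ij = (a_i × b_i) × (a_j × b_j). Then the coordinate vectors v_ij = (−det[a_j b_j b_i], det[a_j b_j a_i]) ∈ ℝ² and v_ji = (det[a_i b_i b_j], −det[a_i b_i a_j]) ∈ ℝ² satisfy x_ij·a_i + y_ij·b_i = Λ_ij = x_ji·a_j + y_ji·b_j, and ‖v_ij‖ = ‖v_ji‖ = ‖Λ_ij‖. -/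
open Matrix Real

/-- Determinant of the 3×3 matrix with columns `x`, `y`, `z`. -/
def det3 (x y z : Fin 3 → ℝ) : ℝ := ((Matrix.of ![x, y, z])ᵀ).det

noncomputable def norm3 (u : Fin 3 → ℝ) : ℝ := Real.sqrt (u ⬝ᵥ u)

noncomputable def norm2 (u : Fin 2 → ℝ) : ℝ := Real.sqrt (u ⬝ᵥ u)

theorem common_line_coordinates (ai bi aj bj : Fin 3 → ℝ)
    (hai : ai ⬝ᵥ ai = 1) (hbi : bi ⬝ᵥ bi = 1) (habi : ai ⬝ᵥ bi = 0)
    (haj : aj ⬝ᵥ aj = 1) (hbj : bj ⬝ᵥ bj = 1) (habj : aj ⬝ᵥ bj = 0)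
    (hdistinct : LinearIndependent ℝ ![crossProduct ai bi, crossProduct aj bj]) :
    let Λ := crossProduct (crossProduct ai bi) (crossProduct aj bj)
    let vij : Fin 2 → ℝ := ![-(det3 aj bj bi), det3 aj bj ai]
    let vji : Fin 2 → ℝ := ![det3 ai bi bj, -(det3 ai bi aj)]
    vij 0 • ai + vij 1 • bi = Λ ∧ vji 0 • aj + vji 1 • bj = Λ ∧
    norm2 vij = norm3 Λ ∧ norm2 vji = norm3 Λ := by
  intro Λ vij vji
  have h1 : vij 0 • ai + vij 1 • bi = Λ := by
    funext k
    fin_cases k <;>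
      simp [Λ, vij, crossProduct, det3, Matrix.det_fin_three, Matrix.transpose_apply, Matrix.vecHead, Matrix.vecTail] <;> ring
  have h2 : vji 0 • aj + vji 1 • bj = Λ := by
    funext k
    fin_cases k <;>
      simp [Λ, vji, crossProduct, det3, Matrix.det_fin_three, Matrix.transpose_apply, Matrix.vecHead, Matrix.vecTail] <;> ring
  have key : ∀ (x y : ℝ) (a b : Fin 3 → ℝ), a ⬝ᵥ a = 1 → b ⬝ᵥ b = 1 →
      a ⬝ᵥ b = 0 → (x • a + y • b) ⬝ᵥ (x • a + y • b) = x ^ 2 + y ^ 2 := by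
    intro x y a b ha hb hab
    have hba : b ⬝ᵥ a = 0 := by rw [dotProduct_comm]; exact hab
    simp [add_dotProduct, dotProduct_add, smul_dotProduct, dotProduct_smul,
      ha, hb, hab, hba]
    ring
  have n1 : norm2 vij = norm3 Λ := by
    unfold norm2 norm3
    rw [← h1, key _ _ _ _ hai hbi habi]
    congr 1
    simp [vij, Fin.sum_univ_two, dotProduct]
    ring
  have n2 : norm2 vji = norm3 Λ := by
    unfold norm2 norm3
    rw [← h2, key _ _ _ _ haj hbj habj]
    congr 1
    simp [vji, Fin.sum_univ_two, dotProduct]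
    ring
  exact ⟨h1, h2, n1, n2⟩
end
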